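/- Let A be an n-by-n nonsingular Hermitian matrix and let 𝒳 be the eigenspace associated with an eigenvalue λ of A. Then for any nonzero subspace 𝒴 of ℂ^n, |λ/λ_max| · sin∠(𝒳, A𝒴) ≤ sin∠(𝒳, 𝒴) ≤ |λ/λ_min| · sin∠(𝒳, A𝒴), where λ_min and λ_max are the smallest and largest magnitude eigenvalues of A, respectively, and A𝒴 = {Ay : y ∈ 𝒴}. -/

import Mathlib

/-!
Write `y = α x + w` with `w ⊥ x`. As `x` is an eigenvector of the Hermitian `A`, also
`A y = λ α x + A w` with `A w ⊥ x`, so `tan ∠(x, y) = ‖w‖ / (|α| ‖x‖)` and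
`tan ∠(x, A y) = ‖A w‖ / (|λ| |α| ‖x‖)`. Expanding in an eigenbasis,
`|λ_min| ‖w‖ ≤ ‖A w‖ ≤ |λ_max| ‖w‖`, which compares the two tangents with the factors
`|λ / λ_min| ≥ 1` and `|λ_max / λ| ≥ 1`; a comparison of tangents with a factor `≥ 1` gives the
same comparison of sines. Since `A` is injective, `A 𝒴 \ {0} = A (𝒴 \ {0})`, and the pointwise
bounds pass to the infima over pairs of nonzero vectors.
-/

open Matrix

noncomputable def hnorm {n : ℕ} (x : Fin n → ℂ) : ℝ :=
  Real.sqrt ((star x ⬝ᵥ x).re)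

noncomputable def cosAngle {n : ℕ} (x y : Fin n → ℂ) : ℝ :=
  ‖star x ⬝ᵥ y‖ / (hnorm x * hnorm y)

noncomputable def sinAngle {n : ℕ} (x y : Fin n → ℂ) : ℝ :=
  Real.sqrt (1 - cosAngle x y ^ 2)

noncomputable def sinAngleSub {n : ℕ} (x : Fin n → ℂ) (K : Submodule ℂ (Fin n → ℂ)) : ℝ :=
  sInf {s : ℝ | ∃ y ∈ K, y ≠ 0 ∧ s = sinAngle x y}

noncomputable def sinAngleSubSub {n : ℕ} (X K : Submodule ℂ (Fin n → ℂ)) : ℝ :=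
  sInf {s : ℝ | ∃ x ∈ X, x ≠ 0 ∧ ∃ y ∈ K, y ≠ 0 ∧ s = sinAngle x y}

def Eigenpair {n : ℕ} (A : Matrix (Fin n) (Fin n) ℂ) (μ : ℂ) (v : Fin n → ℂ) : Prop :=
  v ≠ 0 ∧ A *ᵥ v = μ • v

noncomputable def specNorm {n : ℕ} (M : Matrix (Fin n) (Fin n) ℂ) : ℝ :=
  sSup {r : ℝ | ∃ v : Fin n → ℂ, hnorm v = 1 ∧ r = hnorm (M *ᵥ v)}

noncomputable def frobNorm {m p : ℕ} (M : Matrix (Fin m) (Fin p) ℂ) : ℝ :=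
  Real.sqrt (∑ i, ∑ j, ‖M i j‖ ^ 2)

noncomputable def specCond {n : ℕ} (M : Matrix (Fin n) (Fin n) ℂ) : ℝ :=
  sSup {r : ℝ | ∃ μ ∈ spectrum ℂ M, r = ‖μ‖} /
    sInf {r : ℝ | ∃ μ ∈ spectrum ℂ M, r = ‖μ‖}

def RitzPair {n : ℕ} (A : Matrix (Fin n) (Fin n) ℂ) (K : Submodule ℂ (Fin n → ℂ))
    (μ : ℂ) (u : Fin n → ℂ) : Prop :=
  u ∈ K ∧ u ≠ 0 ∧ ∀ y ∈ K, star y ⬝ᵥ (A *ᵥ u - μ • u) = 0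

def HarmonicRitzPair {n : ℕ} (A : Matrix (Fin n) (Fin n) ℂ) (σ : ℂ)
    (K : Submodule ℂ (Fin n → ℂ)) (θ : ℂ) (v : Fin n → ℂ) : Prop :=
  v ∈ K ∧ v ≠ 0 ∧ ∀ y ∈ K, star ((A - σ • 1) *ᵥ y) ⬝ᵥ (A *ᵥ v - θ • v) = 0

def THarmonicRitzPair {n : ℕ} (A T : Matrix (Fin n) (Fin n) ℂ) (σ : ℂ)
    (K : Submodule ℂ (Fin n → ℂ)) (θ : ℂ) (v : Fin n → ℂ) : Prop :=
  v ∈ K ∧ v ≠ 0 ∧ ∀ y ∈ K, star ((A - σ • 1) *ᵥ y) ⬝ᵥ (T *ᵥ (A *ᵥ v - θ • v)) = 0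

def IsOrthProjOn {n : ℕ} (P : Matrix (Fin n) (Fin n) ℂ)
    (Q : Submodule ℂ (Fin n → ℂ)) : Prop :=
  P.IsHermitian ∧ P * P = P ∧ (∀ v, P *ᵥ v ∈ Q) ∧ (∀ v ∈ Q, P *ᵥ v = v)

open Set

variable {n : ℕ}

lemma star_dotProduct_eq_inner (x y : Fin n → ℂ) :
    star x ⬝ᵥ y = inner ℂ (WithLp.toLp 2 x) (WithLp.toLp 2 y) :=
  dotProduct_comm _ _

lemma hnorm_eq_norm_toLp (x : Fin n → ℂ) : hnorm x = ‖WithLp.toLp 2 x‖ := by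
  rw [hnorm, star_dotProduct_eq_inner, norm_eq_sqrt_re_inner (𝕜 := ℂ)]
  rfl

lemma hnorm_nonneg (x : Fin n → ℂ) : 0 ≤ hnorm x :=
  Real.sqrt_nonneg _

lemma hnorm_pos {x : Fin n → ℂ} (hx : x ≠ 0) : 0 < hnorm x := by
  rw [hnorm_eq_norm_toLp, norm_pos_iff]
  exact fun h => hx (congrArg WithLp.ofLp h)

lemma hnorm_smul (c : ℂ) (x : Fin n → ℂ) : hnorm (c • x) = ‖c‖ * hnorm x := by
  rw [hnorm_eq_norm_toLp, hnorm_eq_norm_toLp, WithLp.toLp_smul, norm_smul]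

lemma sinAngle_nonneg (x y : Fin n → ℂ) : 0 ≤ sinAngle x y :=
  Real.sqrt_nonneg _

lemma hnorm_sq_eq_sum_repr {ι : Type*} [Fintype ι]
    (b : OrthonormalBasis ι ℂ (EuclideanSpace ℂ (Fin n))) (v : Fin n → ℂ) :
    hnorm v ^ 2 = ∑ j, ‖b.repr (WithLp.toLp 2 v) j‖ ^ 2 := by
  rw [hnorm_eq_norm_toLp, ← b.repr.norm_map, EuclideanSpace.norm_sq_eq]

lemma star_dotProduct_self (x : Fin n → ℂ) : star x ⬝ᵥ x = ((hnorm x ^ 2 : ℝ) : ℂ) := by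
  rw [star_dotProduct_eq_inner, inner_self_eq_norm_sq_to_K, hnorm_eq_norm_toLp]
  push_cast; rfl

lemma hnorm_smul_add_sq {x w : Fin n → ℂ} (α : ℂ) (hw : star x ⬝ᵥ w = 0) :
    hnorm (α • x + w) ^ 2 = (‖α‖ * hnorm x) ^ 2 + hnorm w ^ 2 := by
  rw [star_dotProduct_eq_inner] at hw
  rw [hnorm_eq_norm_toLp, WithLp.toLp_add, WithLp.toLp_smul, norm_add_sq (𝕜 := ℂ),
    inner_smul_left, hw, mul_zero, map_zero, mul_zero, add_zero, norm_smul,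
    hnorm_eq_norm_toLp, hnorm_eq_norm_toLp, mul_pow]

lemma sinAngle_smul_add {x w : Fin n → ℂ} (α : ℂ) (hx : x ≠ 0) (hw : star x ⬝ᵥ w = 0)
    (hy : α • x + w ≠ 0) : sinAngle x (α • x + w) = hnorm w / hnorm (α • x + w) := by
  have hx₀ := hnorm_pos hx
  have hy₀ := hnorm_pos hy
  have hcos : cosAngle x (α • x + w) = ‖α‖ * hnorm x / hnorm (α • x + w) := by
    rw [cosAngle, dotProduct_add, dotProduct_smul, hw, star_dotProduct_self, add_zero, smul_eq_mul,
      norm_mul, Complex.norm_real, Real.norm_of_nonneg (by positivity)]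
    field_simp
  have hsin_sq : 1 - cosAngle x (α • x + w) ^ 2 = (hnorm w / hnorm (α • x + w)) ^ 2 := by
    rw [hcos, div_pow, div_pow, eq_div_iff (by positivity), sub_mul, one_mul,
      div_mul_cancel₀ _ (by positivity), hnorm_smul_add_sq α hw]
    ring
  rw [sinAngle, hsin_sq, Real.sqrt_sq (div_nonneg (hnorm_nonneg w) hy₀.le)]

lemma exists_eq_smul_add_of_star_dotProduct_eq_zero {x : Fin n → ℂ} (hx : x ≠ 0)
    (y : Fin n → ℂ) : ∃ (α : ℂ) (w : Fin n → ℂ), star x ⬝ᵥ w = 0 ∧ y = α • x + w := by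
  have hxx : star x ⬝ᵥ x ≠ 0 := by
    rw [star_dotProduct_self]; exact_mod_cast (pow_pos (hnorm_pos hx) 2).ne'
  refine ⟨(star x ⬝ᵥ y) / (star x ⬝ᵥ x), y - ((star x ⬝ᵥ y) / (star x ⬝ᵥ x)) • x, ?_, by abel⟩
  rw [dotProduct_sub, dotProduct_smul, smul_eq_mul, div_mul_cancel₀ _ hxx, sub_self]

-- `b / B` is the sine of an angle with tangent `b / p`: a comparison of tangents with
-- factors `r ≤ k` gives the same comparison of sines.
lemma mul_div_le_mul_div_of_tan_le {r k p b p' b' B B' : ℝ} (hr : 0 ≤ r) (hrk : r ≤ k)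
    (hp : 0 ≤ p) (hb : 0 ≤ b) (hb' : 0 ≤ b') (hB : 0 < B) (hB' : 0 < B')
    (hB2 : B ^ 2 = p ^ 2 + b ^ 2) (hB'2 : B' ^ 2 = p' ^ 2 + b' ^ 2)
    (h : r * b' * p ≤ k * b * p') : r * (b' / B') ≤ k * (b / B) := by
  refine le_of_sq_le_sq ?_ (by have := hr.trans hrk; positivity)
  rw [← mul_div_assoc, ← mul_div_assoc, div_pow, div_pow, div_le_div_iff₀ (by positivity)
    (by positivity), hB2, hB'2]
  nlinarith [pow_le_pow_left₀ (by positivity) h 2,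
    mul_le_mul_of_nonneg_right (mul_self_le_mul_self hr hrk) (by positivity : 0 ≤ b ^ 2 * b' ^ 2)]

lemma mul_sinAngle_smul_add_le {x w w' : Fin n → ℂ} {α α' : ℂ} {r k : ℝ} (hx : x ≠ 0)
    (hw : star x ⬝ᵥ w = 0) (hw' : star x ⬝ᵥ w' = 0) (hy : α • x + w ≠ 0)
    (hy' : α' • x + w' ≠ 0) (hr : 0 ≤ r) (hrk : r ≤ k)
    (h : r * hnorm w' * ‖α‖ ≤ k * hnorm w * ‖α'‖) :
    r * sinAngle x (α' • x + w') ≤ k * sinAngle x (α • x + w) := by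
  rw [sinAngle_smul_add α' hx hw' hy', sinAngle_smul_add α hx hw hy]
  refine mul_div_le_mul_div_of_tan_le hr hrk (mul_nonneg (norm_nonneg α) (hnorm_nonneg x))
    (hnorm_nonneg w) (hnorm_nonneg w') (hnorm_pos hy) (hnorm_pos hy') (hnorm_smul_add_sq α hw)
    (hnorm_smul_add_sq α' hw') ?_
  nlinarith [mul_le_mul_of_nonneg_right h (hnorm_nonneg x)]

namespace Matrix.IsHermitian

variable {A : Matrix (Fin n) (Fin n) ℂ} (hA : A.IsHermitian)
include hA

lemma star_dotProduct_mulVec (x y : Fin n → ℂ) : star x ⬝ᵥ (A *ᵥ y) = star (A *ᵥ x) ⬝ᵥ y := by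
  rw [dotProduct_mulVec, star_mulVec, hA.eq]

lemma star_dotProduct_mulVec_eq_zero {l : ℂ} {x w : Fin n → ℂ} (hxe : A *ᵥ x = l • x)
    (hw : star x ⬝ᵥ w = 0) : star x ⬝ᵥ (A *ᵥ w) = 0 := by
  rw [hA.star_dotProduct_mulVec, hxe, star_smul, smul_dotProduct, hw, smul_zero]

lemma exists_eigen_decomposition {l : ℂ} {x : Fin n → ℂ} (hx : x ≠ 0) (hxe : A *ᵥ x = l • x)
    (y : Fin n → ℂ) : ∃ (α : ℂ) (w : Fin n → ℂ), star x ⬝ᵥ w = 0 ∧ star x ⬝ᵥ (A *ᵥ w) = 0 ∧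
      y = α • x + w ∧ A *ᵥ y = (l * α) • x + A *ᵥ w := by
  obtain ⟨α, w, hw, rfl⟩ := exists_eq_smul_add_of_star_dotProduct_eq_zero hx y
  refine ⟨α, w, hw, hA.star_dotProduct_mulVec_eq_zero hxe hw, rfl, ?_⟩
  rw [mulVec_add, mulVec_smul, hxe, smul_smul, mul_comm]

lemma norm_mul_sinAngle_mulVec_le {l : ℂ} {x y : Fin n → ℂ} {M : ℝ} (hx : x ≠ 0)
    (hxe : A *ᵥ x = l • x) (hAy : A *ᵥ y ≠ 0) (hbound : ∀ v, hnorm (A *ᵥ v) ≤ M * hnorm v) :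
    ‖l‖ * sinAngle x (A *ᵥ y) ≤ M * sinAngle x y := by
  have hy : y ≠ 0 := by rintro rfl; exact hAy (mulVec_zero A)
  obtain ⟨α, w, hw, hAw, rfl, hAyw⟩ := hA.exists_eigen_decomposition hx hxe y
  have hlM : ‖l‖ ≤ M :=
    le_of_mul_le_mul_right (by simpa [hxe, hnorm_smul] using hbound x) (hnorm_pos hx)
  rw [hAyw] at hAy ⊢
  refine mul_sinAngle_smul_add_le hx hw hAw hy hAy (norm_nonneg l) hlM ?_
  rw [norm_mul]
  nlinarith [mul_le_mul_of_nonneg_right (hbound w) (by positivity : 0 ≤ ‖l‖ * ‖α‖)]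

lemma mul_sinAngle_le_norm_mul_sinAngle_mulVec {l : ℂ} {x y : Fin n → ℂ} {m : ℝ} (hx : x ≠ 0)
    (hxe : A *ᵥ x = l • x) (hAy : A *ᵥ y ≠ 0) (hm : 0 ≤ m)
    (hbound : ∀ v, m * hnorm v ≤ hnorm (A *ᵥ v)) :
    m * sinAngle x y ≤ ‖l‖ * sinAngle x (A *ᵥ y) := by
  have hy : y ≠ 0 := by rintro rfl; exact hAy (mulVec_zero A)
  obtain ⟨α, w, hw, hAw, rfl, hAyw⟩ := hA.exists_eigen_decomposition hx hxe y
  have hml : m ≤ ‖l‖ :=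
    le_of_mul_le_mul_right (by simpa [hxe, hnorm_smul] using hbound x) (hnorm_pos hx)
  rw [hAyw] at hAy ⊢
  refine mul_sinAngle_smul_add_le hx hAw hw hAy hy hm hml ?_
  rw [norm_mul]
  nlinarith [mul_le_mul_of_nonneg_right (hbound w) (by positivity : 0 ≤ ‖l‖ * ‖α‖)]

lemma repr_toLp_mulVec (v : Fin n → ℂ) (j : Fin n) :
    hA.eigenvectorBasis.repr (WithLp.toLp 2 (A *ᵥ v)) j =
      hA.eigenvalues j * hA.eigenvectorBasis.repr (WithLp.toLp 2 v) j := by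
  rw [OrthonormalBasis.repr_apply_apply, OrthonormalBasis.repr_apply_apply,
    ← WithLp.toLp_ofLp _ (hA.eigenvectorBasis j), ← star_dotProduct_eq_inner,
    ← star_dotProduct_eq_inner, hA.star_dotProduct_mulVec, hA.mulVec_eigenvectorBasis, star_smul,
    smul_dotProduct, star_trivial, Complex.real_smul]

lemma eigenpair_eigenvalues (j : Fin n) :
    Eigenpair A (hA.eigenvalues j) (hA.eigenvectorBasis j) := by
  refine ⟨fun h => hA.eigenvectorBasis.orthonormal.ne_zero j (congrArg (WithLp.toLp 2) h), ?_⟩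
  rw [hA.mulVec_eigenvectorBasis]
  ext; simp [Complex.real_smul]

lemma hnorm_mulVec_sq (v : Fin n → ℂ) :
    hnorm (A *ᵥ v) ^ 2 =
      ∑ j, ‖(hA.eigenvalues j : ℂ)‖ ^ 2 * ‖hA.eigenvectorBasis.repr (WithLp.toLp 2 v) j‖ ^ 2 := by
  simp only [hnorm_sq_eq_sum_repr hA.eigenvectorBasis, hA.repr_toLp_mulVec, norm_mul, mul_pow]

lemma hnorm_mulVec_le {M : ℝ} (hM : 0 ≤ M) (hμ : ∀ μ v, Eigenpair A μ v → ‖μ‖ ≤ M)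
    (v : Fin n → ℂ) : hnorm (A *ᵥ v) ≤ M * hnorm v := by
  refine le_of_sq_le_sq ?_ (mul_nonneg hM (hnorm_nonneg v))
  rw [hA.hnorm_mulVec_sq, mul_pow, hnorm_sq_eq_sum_repr hA.eigenvectorBasis, Finset.mul_sum]
  gcongr with j
  exact hμ _ _ (hA.eigenpair_eigenvalues j)

lemma le_hnorm_mulVec {m : ℝ} (hm : 0 ≤ m) (hμ : ∀ μ v, Eigenpair A μ v → m ≤ ‖μ‖)
    (v : Fin n → ℂ) : m * hnorm v ≤ hnorm (A *ᵥ v) := by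
  refine le_of_sq_le_sq ?_ (hnorm_nonneg _)
  rw [hA.hnorm_mulVec_sq, mul_pow, hnorm_sq_eq_sum_repr hA.eigenvectorBasis, Finset.mul_sum]
  gcongr with j
  exact hμ _ _ (hA.eigenpair_eigenvalues j)

end Matrix.IsHermitian

section sInf

variable {α β : Type*} {s : Set α} {t : Set β} {f g : α → β → ℝ}

lemma mul_sInf_image2_le_sInf_image2 {c : ℝ} (hc : 0 ≤ c) (hg : ∀ a ∈ s, ∀ b ∈ t, 0 ≤ g a b)
    (h : ∀ a ∈ s, ∀ b ∈ t, c * g a b ≤ f a b) : c * sInf (image2 g s t) ≤ sInf (image2 f s t) := by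
  rcases (image2 f s t).eq_empty_or_nonempty with hf | hf
  · rw [hf, image2_eq_empty_iff.mpr (image2_eq_empty_iff.mp hf), Real.sInf_empty, mul_zero]
  refine le_csInf hf ?_
  rintro _ ⟨a, ha, b, hb, rfl⟩
  have hbdd : BddBelow (image2 g s t) := ⟨0, by rintro _ ⟨a, ha, b, hb, rfl⟩; exact hg a ha b hb⟩
  calc c * sInf (image2 g s t) ≤ c * g a b :=
        mul_le_mul_of_nonneg_left (csInf_le hbdd (mem_image2_of_mem ha hb)) hc
    _ ≤ f a b := h a ha b hb

lemma sInf_image2_le_mul_sInf_image2 {d : ℝ} (hd : 0 ≤ d) (hf : ∀ a ∈ s, ∀ b ∈ t, 0 ≤ f a b)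
    (h : ∀ a ∈ s, ∀ b ∈ t, f a b ≤ d * g a b) : sInf (image2 f s t) ≤ d * sInf (image2 g s t) := by
  have key := mul_sInf_image2_le_sInf_image2 (f := fun a b => d * g a b) zero_le_one hf
    (by simpa using h)
  rw [one_mul, ← image_image2] at key
  exact key.trans_eq (Real.sInf_smul_of_nonneg hd _)

end sInf

lemma sinAngleSubSub_eq_sInf_image2 (X K : Submodule ℂ (Fin n → ℂ)) :
    sinAngleSubSub X K =
      sInf (image2 sinAngle ((X : Set (Fin n → ℂ)) \ {0}) ((K : Set _) \ {0})) := by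
  rw [sinAngleSubSub]
  congr 1
  ext s
  simp [eq_comm, and_assoc]

lemma sinAngleSubSub_map_mulVecLin {A : Matrix (Fin n) (Fin n) ℂ}
    (hinj : Function.Injective A.mulVec) (X K : Submodule ℂ (Fin n → ℂ)) :
    sinAngleSubSub X (K.map A.mulVecLin) = sInf (image2 (fun x y => sinAngle x (A *ᵥ y))
      ((X : Set (Fin n → ℂ)) \ {0}) ((K : Set _) \ {0})) := by
  have hK : (K.map A.mulVecLin : Set (Fin n → ℂ)) \ {0} = A.mulVec '' ((K : Set _) \ {0}) := by
    rw [Submodule.map_coe, coe_mulVecLin, image_sdiff hinj, image_singleton, mulVec_zero]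
  rw [sinAngleSubSub_eq_sInf_image2, hK, image2_image_right]

theorem stmt5_sin_two_sided_subspace_bound_general
    {n : ℕ} (A : Matrix (Fin n) (Fin n) ℂ) (hA : A.IsHermitian) (hdet : IsUnit A.det)
    (l : ℂ) (X : Submodule ℂ (Fin n → ℂ))
    (hX : ∀ w, w ∈ X ↔ A *ᵥ w = l • w)
    (lmin lmax : ℂ) (xmin : Fin n → ℂ)
    (hmin : Eigenpair A lmin xmin)
    (hminLe : ∀ μ v, Eigenpair A μ v → ‖lmin‖ ≤ ‖μ‖)
    (hmaxGe : ∀ μ v, Eigenpair A μ v → ‖μ‖ ≤ ‖lmax‖)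
    (Y : Submodule ℂ (Fin n → ℂ)) :
    ‖l / lmax‖ * sinAngleSubSub X (Y.map (Matrix.mulVecLin A)) ≤
        sinAngleSubSub X Y ∧
      sinAngleSubSub X Y ≤
        ‖l / lmin‖ * sinAngleSubSub X (Y.map (Matrix.mulVecLin A)) := by
  have hinj : Function.Injective A.mulVec :=
    mulVec_injective_iff_isUnit.mpr ((isUnit_iff_isUnit_det A).mpr hdet)
  have hAne {v : Fin n → ℂ} (hv : v ≠ 0) : A *ᵥ v ≠ 0 := (hinj.ne_iff' (mulVec_zero A)).mpr hv
  have hlmin : 0 < ‖lmin‖ := norm_pos_iff.mpr fun h => hAne hmin.1 (by rw [hmin.2, h, zero_smul])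
  have hlow := hA.le_hnorm_mulVec (norm_nonneg _) hminLe
  have hup := hA.hnorm_mulVec_le (norm_nonneg _) hmaxGe
  rw [sinAngleSubSub_map_mulVecLin hinj, sinAngleSubSub_eq_sInf_image2, norm_div, norm_div]
  constructor
  · refine mul_sInf_image2_le_sInf_image2 (by positivity) (fun _ _ _ _ => sinAngle_nonneg ..) ?_
    rintro x ⟨hxX, hx⟩ y ⟨-, hy⟩
    have hxe := (hX x).1 hxX
    have hl : 0 < ‖l‖ := norm_pos_iff.mpr fun h => hAne hx (by rw [hxe, h, zero_smul])
    rw [div_mul_eq_mul_div, div_le_iff₀' (hl.trans_le (hmaxGe l x ⟨hx, hxe⟩))]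
    exact hA.norm_mul_sinAngle_mulVec_le hx hxe (hAne hy) hup
  · refine sInf_image2_le_mul_sInf_image2 (by positivity) (fun _ _ _ _ => sinAngle_nonneg ..) ?_
    rintro x ⟨hxX, hx⟩ y ⟨-, hy⟩
    rw [div_mul_eq_mul_div, le_div_iff₀' hlmin]
    exact hA.mul_sinAngle_le_norm_mul_sinAngle_mulVec hx ((hX x).1 hxX) (hAne hy) hlmin.le hlow

/-- Corollary 4.2 (two-sided sine bound between an eigenspace and a subspace). -/
theorem stmt5_sin_two_sided_subspace_bound
    {n : ℕ} (A : Matrix (Fin n) (Fin n) ℂ) (hA : A.IsHermitian) (hdet : IsUnit A.det)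
    (l : ℂ) (X : Submodule ℂ (Fin n → ℂ))
    (hX : ∀ w, w ∈ X ↔ A *ᵥ w = l • w) (hXne : X ≠ ⊥)
    (lmin lmax : ℂ) (xmin xmax : Fin n → ℂ)
    (hmin : Eigenpair A lmin xmin) (hmax : Eigenpair A lmax xmax)
    (hminLe : ∀ μ v, Eigenpair A μ v → ‖lmin‖ ≤ ‖μ‖)
    (hmaxGe : ∀ μ v, Eigenpair A μ v → ‖μ‖ ≤ ‖lmax‖)
    (Y : Submodule ℂ (Fin n → ℂ)) (hY : Y ≠ ⊥) :
    ‖l / lmax‖ * sinAngleSubSub X (Y.map (Matrix.mulVecLin A)) ≤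
        sinAngleSubSub X Y ∧
      sinAngleSubSub X Y ≤
        ‖l / lmin‖ * sinAngleSubSub X (Y.map (Matrix.mulVecLin A)) :=
  stmt5_sin_two_sided_subspace_bound_general A hA hdet l X hX lmin lmax xmin hmin hminLe hmaxGe Y
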